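/- Let Λ ⊂ ℝ be open and γ ∈ ℝ. Suppose that for each j ∈ {0, …, N−1} there is a continuous function 𝒞_j : Λ → M₂(ℝ) such that a_{(k+1)N+j−1}·(X_{kN+j}(λ) − γ·Id) → 𝒞_j(λ) as k → ∞, uniformly in λ on every compact subset of Λ. If discr(𝒞_j(λ)) < 0 for all j ∈ {0,…,N−1} and all λ ∈ Λ, then for every compact set K ⊂ Λ there exist c ≥ 1 and M ≥ 1 such that for all v ∈ ℝ², all λ ∈ K and all n ≥ M: c⁻¹·‖v‖² ≤ |Q_n^λ(v)| ≤ c·‖v‖². -/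

import Mathlib

/-! Since `E` is skew, the form `v ↦ ⟨E C v, v⟩` does not see multiples of the identity added
to `C`, so along `n = kN + j` the form `Q_n^λ` is the form of `a_{n+N-1}(X_n(λ) - γ)`, which
converges uniformly on `K` to the form of `𝒞_j(λ)`. The identity
`(C₀₁ - C₁₀)·⟨E C v, v⟩ = (square) + (square) - discr(C)/4·‖v‖²` shows that a negative
discriminant makes the limit form definite, with `|⟨E C v, v⟩| ≥ -discr(C)/(4|C₀₁ - C₁₀|)·‖v‖²`.
Compactness makes this bound uniform in `λ ∈ K`, and it survives a small uniform perturbation. -/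

open Filter Matrix
open scoped Matrix

/-- The product `C (n₀ + len - 1) * ⋯ * C n₀` of real matrices, larger indices on the left. -/
noncomputable def prodDescN (C : ℕ → Matrix (Fin 2) (Fin 2) ℝ) (n₀ : ℕ) :
    ℕ → Matrix (Fin 2) (Fin 2) ℝ
  | 0 => 1
  | len + 1 => C (n₀ + len) * prodDescN C n₀ len

def formE (C : Matrix (Fin 2) (Fin 2) ℝ) (v : Fin 2 → ℝ) : ℝ :=
  ((!![0, -1; 1, 0] * C) *ᵥ v) ⬝ᵥ v

lemma formE_apply (C : Matrix (Fin 2) (Fin 2) ℝ) (v : Fin 2 → ℝ) :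
    formE C v = -C 1 0 * v 0 ^ 2 + (C 0 0 - C 1 1) * v 0 * v 1 + C 0 1 * v 1 ^ 2 := by
  simp only [formE, dotProduct, mulVec, Matrix.mul_apply, of_apply, cons_val', cons_val_fin_one,
    Fin.sum_univ_two, cons_val_zero, cons_val_one, zero_mul, neg_mul, one_mul, zero_add, add_zero]
  ring

lemma formE_sub (A B : Matrix (Fin 2) (Fin 2) ℝ) (v : Fin 2 → ℝ) :
    formE (A - B) v = formE A v - formE B v := by
  simp only [formE_apply, Matrix.sub_apply]
  ring

lemma formE_smul_sub_smul_one (c γ : ℝ) (C : Matrix (Fin 2) (Fin 2) ℝ) (v : Fin 2 → ℝ) :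
    formE (c • (C - γ • 1)) v = c * formE C v := by
  simp only [formE_apply, Matrix.smul_apply, Matrix.sub_apply, one_fin_two, of_apply, cons_val',
    cons_val_zero, cons_val_fin_one, cons_val_one, smul_eq_mul, mul_zero, sub_zero, mul_one]
  ring

lemma sub_mul_formE (C : Matrix (Fin 2) (Fin 2) ℝ) (v : Fin 2 → ℝ) :
    (C 0 1 - C 1 0) * formE C v = (C 1 0 * v 0 - (C 0 0 - C 1 1) / 2 * v 1) ^ 2
      + (C 0 1 * v 1 + (C 0 0 - C 1 1) / 2 * v 0) ^ 2 - C.discr / 4 * (v 0 ^ 2 + v 1 ^ 2) := by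
  rw [formE_apply, discr_fin_two, trace_fin_two, det_fin_two]
  ring

lemma neg_discr_mul_le_abs_mul_abs_formE (C : Matrix (Fin 2) (Fin 2) ℝ) (v : Fin 2 → ℝ) :
    -C.discr / 4 * (v 0 ^ 2 + v 1 ^ 2) ≤ |C 0 1 - C 1 0| * |formE C v| := by
  rw [← abs_mul]
  nlinarith [sub_mul_formE C v, le_abs_self ((C 0 1 - C 1 0) * formE C v),
    sq_nonneg (C 1 0 * v 0 - (C 0 0 - C 1 1) / 2 * v 1),
    sq_nonneg (C 0 1 * v 1 + (C 0 0 - C 1 1) / 2 * v 0)]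

lemma sub_ne_zero_of_discr_neg {C : Matrix (Fin 2) (Fin 2) ℝ} (hC : C.discr < 0) :
    C 0 1 - C 1 0 ≠ 0 := by
  intro h
  have := neg_discr_mul_le_abs_mul_abs_formE C ![1, 0]
  simp only [cons_val_zero, cons_val_one, cons_val_fin_one, one_pow, ne_eq, OfNat.ofNat_ne_zero,
    not_false_eq_true, zero_pow, add_zero, mul_one, h, abs_zero, zero_mul] at this
  linarith

lemma neg_discr_div_mul_le_abs_formE {C : Matrix (Fin 2) (Fin 2) ℝ} (hC : C.discr < 0)
    (v : Fin 2 → ℝ) :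
    -C.discr / 4 / |C 0 1 - C 1 0| * (v 0 ^ 2 + v 1 ^ 2) ≤ |formE C v| := by
  rw [div_mul_eq_mul_div, div_le_iff₀' (abs_pos.2 (sub_ne_zero_of_discr_neg hC))]
  exact neg_discr_mul_le_abs_mul_abs_formE C v

lemma exists_pos_mul_le_abs_formE {α : Type*} [TopologicalSpace α]
    {C : α → Matrix (Fin 2) (Fin 2) ℝ} {K : Set α} (hK : IsCompact K) (hC : ContinuousOn C K)
    (hdiscr : ∀ x ∈ K, (C x).discr < 0) :
    ∃ δ > 0, ∀ x ∈ K, ∀ v : Fin 2 → ℝ, δ * (v 0 ^ 2 + v 1 ^ 2) ≤ |formE (C x) v| := by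
  have hne : ∀ x ∈ K, C x 0 1 - C x 1 0 ≠ 0 := fun x hx => sub_ne_zero_of_discr_neg (hdiscr x hx)
  have hcont : ContinuousOn (fun x => -(C x).discr / 4 / |C x 0 1 - C x 1 0|) K := by
    refine ContinuousOn.div ?_ (by fun_prop) fun x hx => abs_ne_zero.2 (hne x hx)
    simp only [discr_fin_two, trace_fin_two, det_fin_two]
    fun_prop
  obtain ⟨δ, hδ, hle⟩ := hK.exists_forall_le' hcont fun x hx =>
    div_pos (by linarith [hdiscr x hx]) (abs_pos.2 (hne x hx))
  exact ⟨δ, hδ, fun x hx v => (mul_le_mul_of_nonneg_right (hle x hx) (by positivity)).trans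
    (neg_discr_div_mul_le_abs_formE (hdiscr x hx) v)⟩

def AbsComparable (c r s : ℝ) : Prop := c⁻¹ * s ≤ |r| ∧ |r| ≤ c * s

lemma AbsComparable.mono {c c' r s : ℝ} (h : AbsComparable c r s) (hc : 0 < c) (hcc' : c ≤ c')
    (hs : 0 ≤ s) : AbsComparable c' r s := by
  constructor
  · exact (mul_le_mul_of_nonneg_right (inv_anti₀ hc hcc') hs).trans h.1
  · exact h.2.trans (mul_le_mul_of_nonneg_right hcc' hs)

section
attribute [local instance] Matrix.normedAddCommGroup

lemma abs_formE_le (C : Matrix (Fin 2) (Fin 2) ℝ) (v : Fin 2 → ℝ) :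
    |formE C v| ≤ 2 * ‖C‖ * (v 0 ^ 2 + v 1 ^ 2) := by
  have hC (i j : Fin 2) : |C i j| ≤ ‖C‖ := C.norm_entry_le_entrywise_sup_norm
  calc |formE C v|
      ≤ |C 1 0| * v 0 ^ 2 + (|C 0 0| + |C 1 1|) * |v 0| * |v 1| + |C 0 1| * v 1 ^ 2 := by
        rw [formE_apply]
        refine (abs_add_three _ _ _).trans ?_
        simp only [abs_mul, abs_neg, abs_pow, sq_abs]
        gcongr
        exact abs_sub (C 0 0) (C 1 1)
    _ ≤ ‖C‖ * v 0 ^ 2 + 2 * ‖C‖ * |v 0| * |v 1| + ‖C‖ * v 1 ^ 2 := by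
        gcongr
        · exact hC 1 0
        · linarith [hC 0 0, hC 1 1]
        · exact hC 0 1
    _ ≤ 2 * ‖C‖ * (v 0 ^ 2 + v 1 ^ 2) := by
        nlinarith [norm_nonneg C, sq_nonneg (|v 0| - |v 1|), sq_abs (v 0), sq_abs (v 1)]

lemma TendstoUniformlyOn.exists_absComparable_formE {ι α : Type*} [TopologicalSpace α]
    {l : Filter ι} {F : ι → α → Matrix (Fin 2) (Fin 2) ℝ} {C : α → Matrix (Fin 2) (Fin 2) ℝ}
    {K : Set α} (hF : TendstoUniformlyOn F C l K) (hK : IsCompact K) (hC : ContinuousOn C K)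
    (hdiscr : ∀ x ∈ K, (C x).discr < 0) :
    ∃ c > 0, ∀ᶠ i in l, ∀ x ∈ K, ∀ v : Fin 2 → ℝ,
      AbsComparable c (formE (F i x) v) (v 0 ^ 2 + v 1 ^ 2) := by
  obtain ⟨δ, hδ, hlow⟩ := exists_pos_mul_le_abs_formE hK hC hdiscr
  obtain ⟨R, hR⟩ := hK.exists_bound_of_continuousOn hC
  have hclose : ∀ᶠ i in l, ∀ x ∈ K, ‖F i x - C x‖ ≤ δ / 4 := by
    filter_upwards [Metric.tendstoUniformlyOn_iff.1 hF (δ / 4) (by positivity)] with i hi x hx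
    rw [← dist_eq_norm, dist_comm]
    exact (hi x hx).le
  refine ⟨max (2 / δ) (2 * R + δ / 2), by positivity, ?_⟩
  filter_upwards [hclose] with i hi x hx v
  set s := v 0 ^ 2 + v 1 ^ 2
  have hs : 0 ≤ s := by positivity
  have hdiff : |formE (F i x) v - formE (C x) v| ≤ δ / 2 * s := by
    rw [← formE_sub]
    calc _ ≤ 2 * ‖F i x - C x‖ * s := abs_formE_le _ _
      _ ≤ 2 * (δ / 4) * s := by gcongr; exact hi x hx
      _ = δ / 2 * s := by ring
  have hup : |formE (C x) v| ≤ 2 * R * s :=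
    (abs_formE_le _ _).trans (by gcongr; exact hR x hx)
  have h₁ := abs_sub_abs_le_abs_sub (formE (F i x) v) (formE (C x) v)
  have h₂ := abs_sub_abs_le_abs_sub (formE (C x) v) (formE (F i x) v)
  rw [abs_sub_comm] at h₂
  constructor
  · calc _ ≤ (2 / δ)⁻¹ * s := by gcongr; exact le_max_left _ _
      _ ≤ _ := by rw [inv_div]; linarith [hlow x hx v]
  · calc _ ≤ (2 * R + δ / 2) * s := by linarith
      _ ≤ _ := by gcongr; exact le_max_right _ _

end

theorem stmt14_general (N : ℕ) (hN : 1 ≤ N)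
    (a : ℕ → ℝ)
    (Λ : Set ℝ) (γ : ℝ)
    -- `X n lam` is the matrix `X_n(λ) = B_{n+N-1}(λ) ⋯ B_n(λ)`
    (X : ℕ → ℝ → Matrix (Fin 2) (Fin 2) ℝ)
    (Cl : ℕ → ℝ → Matrix (Fin 2) (Fin 2) ℝ)
    (hcont : ∀ j < N, ContinuousOn (Cl j) Λ)
    (hconv : ∀ j < N, ∀ K ⊆ Λ, IsCompact K → TendstoUniformlyOn
      (fun k lam => a ((k + 1) * N + j - 1) • (X (k * N + j) lam
        - γ • (1 : Matrix (Fin 2) (Fin 2) ℝ))) (Cl j) atTop K)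
    (hdiscr : ∀ j < N, ∀ lam ∈ Λ, ((Cl j lam).trace) ^ 2 - 4 * (Cl j lam).det < 0) :
    ∀ K ⊆ Λ, IsCompact K → ∃ c : ℝ, 1 ≤ c ∧ ∃ M : ℕ, 1 ≤ M ∧
      ∀ v : Fin 2 → ℝ, ∀ lam ∈ K, ∀ n : ℕ, M ≤ n →
        c⁻¹ * (v 0 ^ 2 + v 1 ^ 2)
            ≤ |a (n + N - 1) * ((((!![0, -1; 1, 0] : Matrix (Fin 2) (Fin 2) ℝ)
                * X n lam).mulVec v) ⬝ᵥ v)| ∧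
          |a (n + N - 1) * ((((!![0, -1; 1, 0] : Matrix (Fin 2) (Fin 2) ℝ)
                * X n lam).mulVec v) ⬝ᵥ v)| ≤ c * (v 0 ^ 2 + v 1 ^ 2) := by
  intro K hKΛ hK
  have hbound (j : Fin N) := (hconv j j.2 K hKΛ hK).exists_absComparable_formE hK
    ((hcont j j.2).mono hKΛ) fun lam hlam =>
      discr_fin_two (Cl j lam) ▸ hdiscr j j.2 lam (hKΛ hlam)
  choose c hc hev using hbound
  obtain ⟨c', hc'⟩ := (Set.finite_range c).bddAbove
  obtain ⟨k₀, hk₀⟩ := eventually_atTop.1 (eventually_all.2 hev)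
  refine ⟨max 1 c', le_max_left _ _, k₀ * N + 1, by omega, fun v lam hlam n hn => ?_⟩
  have hk : k₀ ≤ n / N := (Nat.le_div_iff_mul_le (by omega)).2 (by omega)
  have hidx : (n / N + 1) * N + n % N - 1 = n + N - 1 := by
    rw [add_mul, one_mul, add_right_comm, Nat.div_add_mod']
  have h := hk₀ _ hk ⟨n % N, Nat.mod_lt n (by omega)⟩ lam hlam v
  rw [formE_smul_sub_smul_one, hidx, Nat.div_add_mod'] at h
  exact h.mono (hc _) ((hc' ⟨_, rfl⟩).trans (le_max_right _ _)) (by positivity)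

theorem stmt14 (N : ℕ) (hN : 1 ≤ N)
    (a b : ℕ → ℝ) (hapos : ∀ n, 0 < a n)
    (Λ : Set ℝ) (hΛ : IsOpen Λ) (γ : ℝ)
    -- `X n lam` is the matrix `X_n(λ) = B_{n+N-1}(λ) ⋯ B_n(λ)`
    (X : ℕ → ℝ → Matrix (Fin 2) (Fin 2) ℝ)
    (hX : ∀ (n : ℕ) (lam : ℝ), X n lam =
      prodDescN (fun k => !![0, 1; -(a (k - 1) / a k), (lam - b k) / a k]) n N)
    (Cl : ℕ → ℝ → Matrix (Fin 2) (Fin 2) ℝ)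
    (hcont : ∀ j < N, ContinuousOn (Cl j) Λ)
    (hconv : ∀ j < N, ∀ K ⊆ Λ, IsCompact K → TendstoUniformlyOn
      (fun k lam => a ((k + 1) * N + j - 1) • (X (k * N + j) lam
        - γ • (1 : Matrix (Fin 2) (Fin 2) ℝ))) (Cl j) atTop K)
    (hdiscr : ∀ j < N, ∀ lam ∈ Λ, ((Cl j lam).trace) ^ 2 - 4 * (Cl j lam).det < 0) :
    ∀ K ⊆ Λ, IsCompact K → ∃ c : ℝ, 1 ≤ c ∧ ∃ M : ℕ, 1 ≤ M ∧
      ∀ v : Fin 2 → ℝ, ∀ lam ∈ K, ∀ n : ℕ, M ≤ n →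
        c⁻¹ * (v 0 ^ 2 + v 1 ^ 2)
            ≤ |a (n + N - 1) * ((((!![0, -1; 1, 0] : Matrix (Fin 2) (Fin 2) ℝ)
                * X n lam).mulVec v) ⬝ᵥ v)| ∧
          |a (n + N - 1) * ((((!![0, -1; 1, 0] : Matrix (Fin 2) (Fin 2) ℝ)
                * X n lam).mulVec v) ⬝ᵥ v)| ≤ c * (v 0 ^ 2 + v 1 ^ 2) :=
  stmt14_general N hN a Λ γ X Cl hcont hconv hdiscr
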